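/- An abelian subgroup S of the n-qubit Pauli group that does not contain -I has a common +1 eigenspace of dimension 2^{n - D(S)}, where D(S) is the minimal number of generators of S. -/

import Mathlib

/-!
Because `S` avoids `-1`, every `s ∈ S` squares to `1` (the square of `i^k P` is `(-1)^k`), so `S`
is a finite elementary abelian `2`-group: an `𝔽₂`-vector space whose dimension is the minimal
number of generators, hence `|S| = 2 ^ D(S)`. The average of the elements of `S` is a projection
onto the common `+1` eigenspace, so that space has dimension `(1/|S|) ∑ₛ tr s`. An element
`s ≠ 1` of `S` is a scalar multiple of a nontrivial Pauli tensor product (the scalar matrices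
`±i` square to `-1`), so it is traceless, and the sum is `tr 1 = 2 ^ n`.
-/

/-- The four single-qubit Pauli matrices I, X, Y, Z. -/
def pauliMat : Fin 4 → Matrix (Fin 2) (Fin 2) ℂ
  | 0 => 1
  | 1 => !![0, 1; 1, 0]
  | 2 => !![0, -Complex.I; Complex.I, 0]
  | 3 => !![1, 0; 0, -1]

/-- The n-qubit Pauli operator (tensor product of single-qubit Paulis) labelled by
p : Fin n → Fin 4. -/
noncomputable def pauliOp (n : ℕ) (p : Fin n → Fin 4) :
    Matrix (Fin n → Fin 2) (Fin n → Fin 2) ℂ :=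
  Matrix.of fun i j => ∏ k, pauliMat (p k) (i k) (j k)

namespace Matrix

variable {ι m R : Type*} [Fintype ι] [CommSemiring R]

def piKronecker (A : ι → Matrix m m R) : Matrix (ι → m) (ι → m) R :=
  of fun i j => ∏ k, A k (i k) (j k)

theorem piKronecker_mul [DecidableEq ι] [Fintype m] (A B : ι → Matrix m m R) :
    piKronecker A * piKronecker B = piKronecker (A * B) := by
  ext i j
  simp only [piKronecker, mul_apply, of_apply, Pi.mul_apply, Finset.prod_univ_sum,
    Fintype.piFinset_univ, Finset.prod_mul_distrib]

theorem piKronecker_one [DecidableEq m] : piKronecker (1 : ι → Matrix m m R) = 1 := by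
  ext i j
  simp only [piKronecker, of_apply, Pi.one_apply, one_apply, Finset.prod_boole, Finset.mem_univ,
    forall_const, funext_iff]

theorem trace_piKronecker [DecidableEq ι] [Fintype m] (A : ι → Matrix m m R) :
    trace (piKronecker A) = ∏ k, trace (A k) := by
  simp only [trace, diag, piKronecker, of_apply, Finset.prod_univ_sum, Fintype.piFinset_univ]

end Matrix

section Pauli

open Matrix

theorem pauliMat_mul_self (j : Fin 4) : pauliMat j * pauliMat j = 1 := by
  fin_cases j <;> ext a b <;> fin_cases a <;> fin_cases b <;>
    simp [pauliMat, mul_apply, Fin.sum_univ_two]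

theorem trace_pauliMat {j : Fin 4} (hj : j ≠ 0) : (pauliMat j).trace = 0 := by
  fin_cases j <;> simp_all [pauliMat, trace, Fin.sum_univ_two]

variable {n : ℕ}

theorem pauliOp_eq_piKronecker (p : Fin n → Fin 4) :
    pauliOp n p = piKronecker (pauliMat ∘ p) :=
  rfl

theorem pauliOp_zero : pauliOp n 0 = 1 :=
  piKronecker_one

theorem pauliOp_mul_self (p : Fin n → Fin 4) : pauliOp n p * pauliOp n p = 1 := by
  rw [pauliOp_eq_piKronecker, piKronecker_mul]
  convert piKronecker_one
  exact funext fun k => pauliMat_mul_self (p k)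

theorem trace_pauliOp {p : Fin n → Fin 4} (hp : p ≠ 0) : (pauliOp n p).trace = 0 := by
  obtain ⟨j, hj⟩ := Function.ne_iff.mp hp
  rw [pauliOp_eq_piKronecker, trace_piKronecker]
  exact Finset.prod_eq_zero (Finset.mem_univ j) (trace_pauliMat hj)

variable {M : Matrix (Fin n → Fin 2) (Fin n → Fin 2) ℂ} {k : Fin 4} {p : Fin n → Fin 4}

theorem mul_self_eq_neg_one_pow_of_pauli (hM : M = Complex.I ^ (k : ℕ) • pauliOp n p) :
    M * M = (-1 : ℂ) ^ (k : ℕ) • 1 := by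
  rw [hM, smul_mul_smul_comm, pauliOp_mul_self, ← mul_pow, Complex.I_mul_I]

theorem mul_self_eq_one_of_pauli (hM : M = Complex.I ^ (k : ℕ) • pauliOp n p)
    (hsq : M * M ≠ -1) : M * M = 1 := by
  rw [mul_self_eq_neg_one_pow_of_pauli hM] at hsq ⊢
  rcases neg_one_pow_eq_or ℂ (k : ℕ) with h | h <;> rw [h] at hsq ⊢
  · exact one_smul ℂ 1
  · exact absurd (neg_one_smul ℂ 1) hsq

theorem trace_eq_zero_of_pauli (hM : M = Complex.I ^ (k : ℕ) • pauliOp n p) (h1 : M ≠ 1)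
    (hneg : M ≠ -1) (hsq : M * M ≠ -1) : M.trace = 0 := by
  obtain rfl | hp := eq_or_ne p 0
  · rw [pauliOp_zero] at hM
    subst hM
    fin_cases k <;> simp [pow_succ, ← mul_smul] at h1 hneg hsq
  · rw [hM, trace_smul, trace_pauliOp hp, smul_zero]

end Pauli

theorem Submodule.toAddSubgroup_span_zmod {M : Type*} [AddCommGroup M] (n : ℕ)
    [Module (ZMod n) M] (s : Set M) :
    (span (ZMod n) s).toAddSubgroup = AddSubgroup.closure s := by
  rw [← span_int_eq_addSubgroupClosure,
    ← restrictScalars_span ℤ (ZMod n) ZMod.intCast_surjective]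
  rfl

theorem Subgroup.closure_eq_top_iff_span_zmod {G : Type*} [CommGroup G] (n : ℕ)
    [Module (ZMod n) (Additive G)] (s : Set G) :
    closure s = ⊤ ↔ Submodule.span (ZMod n) (Additive.toMul ⁻¹' s) = ⊤ := by
  rw [← toAddSubgroup.injective.eq_iff, toAddSubgroup_closure, map_top,
    ← Submodule.toAddSubgroup_span_zmod n, Submodule.toAddSubgroup_eq_top]

theorem Group.rank_eq_finrank_zmod {G : Type*} [CommGroup G] [Finite G] (p : ℕ) [Fact p.Prime]
    [Module (ZMod p) (Additive G)] : rank G = Module.finrank (ZMod p) (Additive G) := by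
  classical
  apply le_antisymm
  · let b := Module.finBasis (ZMod p) (Additive G)
    let t : Finset G := Finset.univ.image fun i => (b i).toMul
    have hspan : Subgroup.closure (t : Set G) = ⊤ := by
      rw [Subgroup.closure_eq_top_iff_span_zmod p, eq_top_iff, ← b.span_eq]
      refine Submodule.span_mono ?_
      rintro _ ⟨i, rfl⟩
      simp [t]
    exact (rank_le hspan).trans (Finset.card_image_le.trans (by simp))
  · obtain ⟨t, ht, hclosure⟩ := rank_spec G
    rw [Subgroup.closure_eq_top_iff_span_zmod p] at hclosure
    have hrange : Set.range (fun g : t => Additive.ofMul (g : G)) = Additive.toMul ⁻¹' t := by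
      ext x
      simpa using ⟨fun ⟨a, ha, h⟩ => h ▸ ha, fun h => ⟨_, h, rfl⟩⟩
    rw [← ht, ← Fintype.card_coe t]
    exact finrank_le_of_span_eq_top (hrange ▸ hclosure)

theorem mul_comm_of_mul_self_eq_one {G : Type*} [Group G] (hG : ∀ g : G, g * g = 1) (a b : G) :
    a * b = b * a := by
  have inv_eq (g : G) : g⁻¹ = g := inv_eq_of_mul_eq_one_left (hG g)
  rw [← inv_eq (a * b), mul_inv_rev, inv_eq, inv_eq]

theorem Group.nat_card_eq_two_pow_rank {G : Type*} [Group G] [Finite G]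
    (hG : ∀ g : G, g * g = 1) : Nat.card G = 2 ^ rank G := by
  let _ : CommGroup G := { mul_comm := mul_comm_of_mul_self_eq_one hG }
  let _ : Module (ZMod 2) (Additive G) := AddCommGroup.zmodModule fun g => by
    rw [two_nsmul]
    exact hG g.toMul
  rw [rank_eq_finrank_zmod 2]
  exact (Module.natCard_eq_pow_finrank (K := ZMod 2) (V := Additive G)).trans
    (by rw [Nat.card_zmod])

theorem Subgroup.sInf_card_closure_eq_rank {G : Type*} [Group G] (H : Subgroup G) [Group.FG H] :
    sInf {k : ℕ | ∃ t : Finset G, t.card = k ∧ closure (t : Set G) = H} = Group.rank H := by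
  have hmem : ∃ t : Finset G, t.card = Group.rank H ∧ closure (t : Set G) = H := by
    obtain ⟨t, ht, hclosure⟩ := Group.rank_spec H
    refine ⟨t.map (Function.Embedding.subtype _), by simpa using ht, ?_⟩
    rw [Finset.coe_map, Function.Embedding.coe_subtype, ← coe_subtype, ← MonoidHom.map_closure,
      hclosure, ← MonoidHom.range_eq_map, range_subtype]
  refine le_antisymm (Nat.sInf_le hmem) (le_csInf ⟨_, hmem⟩ ?_)
  rintro _ ⟨t, rfl, rfl⟩
  exact rank_closure_finset_le_card t

theorem Matrix.finrank_iInf_eigenspace_one_mul_card {k m : Type*} [Field k] [CharZero k]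
    [Fintype m] [DecidableEq m] (H : Subgroup (Matrix m m k)ˣ) [Fintype H] :
    (Module.finrank k ↥(⨅ s ∈ H, Module.End.eigenspace (mulVecLin (s : Matrix m m k)) 1) : k)
      * Fintype.card H = ∑ s : H, trace ((s : (Matrix m m k)ˣ) : Matrix m m k) := by
  let ρ : Representation k H (m → k) :=
    toLinAlgEquiv'.toMonoidHom.comp ((Units.coeHom _).comp H.subtype)
  have hfixed : (⨅ s ∈ H, Module.End.eigenspace (mulVecLin (s : Matrix m m k)) 1) =
      ρ.invariants := by
    ext v
    simp [ρ, Representation.mem_invariants, Submodule.mem_iInf]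
  have hcard : (Fintype.card H : k) ≠ 0 := Nat.cast_ne_zero.mpr Fintype.card_ne_zero
  have : Invertible (Fintype.card H : k) := invertibleOfNonzero hcard
  rw [hfixed, ← (Representation.isProj_averageMap ρ).trace]
  simp only [Representation.averageMap, GroupAlgebra.average, invOf_eq_inv,
    MonoidAlgebra.of_apply, map_smul, map_sum, Representation.asAlgebraHom_single, one_smul,
    smul_eq_mul]
  rw [mul_comm, mul_inv_cancel_left₀ hcard]
  exact Finset.sum_congr rfl fun s _ => trace_toLin'_eq _

theorem stabilizer_code_dimension_general (n : ℕ)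
    (S : Subgroup (Matrix (Fin n → Fin 2) (Fin n → Fin 2) ℂ)ˣ)
    (hPauli : ∀ s ∈ S, ∃ (k : Fin 4) (p : Fin n → Fin 4),
      ((s : (Matrix (Fin n → Fin 2) (Fin n → Fin 2) ℂ)ˣ) : Matrix (Fin n → Fin 2) (Fin n → Fin 2) ℂ)
        = Complex.I ^ (k : ℕ) • pauliOp n p)
    (hneg : ∀ s ∈ S,
      ((s : (Matrix (Fin n → Fin 2) (Fin n → Fin 2) ℂ)ˣ) : Matrix (Fin n → Fin 2) (Fin n → Fin 2) ℂ)
        ≠ -1) :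
    Module.finrank ℂ ↥
        (⨅ s ∈ S, Module.End.eigenspace
          (Matrix.mulVecLin
            ((s : (Matrix (Fin n → Fin 2) (Fin n → Fin 2) ℂ)ˣ) : Matrix (Fin n → Fin 2) (Fin n → Fin 2) ℂ))
          1)
      = 2 ^ (n - sInf {k : ℕ | ∃ t : Finset (Matrix (Fin n → Fin 2) (Fin n → Fin 2) ℂ)ˣ,
          t.card = k ∧ Subgroup.closure (t : Set (Matrix (Fin n → Fin 2) (Fin n → Fin 2) ℂ)ˣ) = S}) := by
  have hsq_ne (s) (hs : s ∈ S) : (s * s).val ≠ -1 := hneg _ (S.mul_mem hs hs)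
  have hsq (s) (hs : s ∈ S) : s * s = 1 :=
    have ⟨_, _, hM⟩ := hPauli s hs
    Units.ext (mul_self_eq_one_of_pauli hM (hsq_ne s hs))
  have : Finite S := by
    refine Set.Finite.to_subtype <| ((Set.finite_range fun q : Fin 4 × (Fin n → Fin 4) =>
      Complex.I ^ (q.1 : ℕ) • pauliOp n q.2).preimage Units.val_injective.injOn).subset ?_
    intro s hs
    obtain ⟨k, p, hM⟩ := hPauli s hs
    exact ⟨(k, p), hM.symm⟩
  let _ : Fintype S := Fintype.ofFinite S
  rw [S.sInf_card_closure_eq_rank]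
  have hcard : Fintype.card S = 2 ^ Group.rank S := by
    rw [Fintype.card_eq_nat_card]
    exact Group.nat_card_eq_two_pow_rank fun s => Subtype.ext (hsq s s.2)
  have htrace : ∑ s : S, ((s : (Matrix (Fin n → Fin 2) (Fin n → Fin 2) ℂ)ˣ) :
      Matrix (Fin n → Fin 2) (Fin n → Fin 2) ℂ).trace = 2 ^ n := by
    rw [Fintype.sum_eq_single 1 fun s hs => ?_]
    · simp
    · obtain ⟨k, p, hM⟩ := hPauli s s.2
      exact trace_eq_zero_of_pauli hM (fun h => hs (Subtype.ext (Units.ext h))) (hneg s s.2)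
        (hsq_ne s s.2)
  have hdim := Matrix.finrank_iInf_eigenspace_one_mul_card S
  rw [htrace, hcard] at hdim
  norm_cast at hdim
  have hrank : Group.rank S ≤ n :=
    (Nat.pow_dvd_pow_iff_le_right (by norm_num)).mp (Dvd.intro_left _ hdim)
  refine Nat.eq_of_mul_eq_mul_right (pow_pos two_pos (Group.rank S)) ?_
  rwa [← pow_add, Nat.sub_add_cancel hrank]

/-- An abelian subgroup S of the n-qubit Pauli group that does not contain
-I has a common +1 eigenspace of dimension 2^{n - D(S)}, where D(S) is the minimal number
of generators of S. -/
theorem stabilizer_code_dimension (n : ℕ)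
    (S : Subgroup (Matrix (Fin n → Fin 2) (Fin n → Fin 2) ℂ)ˣ)
    (hPauli : ∀ s ∈ S, ∃ (k : Fin 4) (p : Fin n → Fin 4),
      ((s : (Matrix (Fin n → Fin 2) (Fin n → Fin 2) ℂ)ˣ) : Matrix (Fin n → Fin 2) (Fin n → Fin 2) ℂ)
        = Complex.I ^ (k : ℕ) • pauliOp n p)
    (hab : ∀ a ∈ S, ∀ b ∈ S, a * b = b * a)
    (hneg : ∀ s ∈ S,
      ((s : (Matrix (Fin n → Fin 2) (Fin n → Fin 2) ℂ)ˣ) : Matrix (Fin n → Fin 2) (Fin n → Fin 2) ℂ)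
        ≠ -1) :
    Module.finrank ℂ ↥
        (⨅ s ∈ S, Module.End.eigenspace
          (Matrix.mulVecLin
            ((s : (Matrix (Fin n → Fin 2) (Fin n → Fin 2) ℂ)ˣ) : Matrix (Fin n → Fin 2) (Fin n → Fin 2) ℂ))
          1)
      = 2 ^ (n - sInf {k : ℕ | ∃ t : Finset (Matrix (Fin n → Fin 2) (Fin n → Fin 2) ℂ)ˣ,
          t.card = k ∧ Subgroup.closure (t : Set (Matrix (Fin n → Fin 2) (Fin n → Fin 2) ℂ)ˣ) = S}) :=
  stabilizer_code_dimension_general n S hPauli hneg
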